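/- In the setting of the paper with conditions 1⁰–11⁰: let M be a sublattice of L̄₀ (the set of elements ∑ᵢ xᵢ with xᵢ ≤ eᵢ). If t ∈ H_{ij}(x) normalizes G(M) within G (i.e., t⁻¹ G(M) t = G(M)), then t ∈ G(M), i.e., t fixes M pointwise. -/
import Mathlib


open Finset

/-- The group of lattice automorphisms of `L` (order automorphisms), with composition as
multiplication. -/
instance latticeAutGroup {L : Type*} [Lattice L] : Group (L ≃o L) where
  mul f g := g.trans f
  one := OrderIso.refl L
  inv := OrderIso.symm
  mul_assoc f g h := rfl
  one_mul f := rfl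
  mul_one f := rfl
  inv_mul_cancel f := by ext x; exact f.symm_apply_apply x

variable {L : Type*} [CompleteLattice L] {n : ℕ}

/-- `ê i`: the join of all the atoms `e j`, `j ≠ i`. -/
def hatE (e : Fin n → L) (i : Fin n) : L := ((univ : Finset (Fin n)).erase i).sup e

/-- The `i`-th component of the support: `[x]ᵢ = (x ⊔ êᵢ) ⊓ eᵢ`. -/
def sc (e : Fin n → L) (x : L) (i : Fin n) : L := (x ⊔ hatE e i) ⊓ e i

/-- The set `L̄₀` of all elements of the form `x₁ ⊔ ⋯ ⊔ xₙ` with `xᵢ ≤ eᵢ`. -/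
def L0bar (e : Fin n → L) : Set L :=
  {x | ∃ y : Fin n → L, (∀ i, y i ≤ e i) ∧ x = (univ : Finset (Fin n)).sup y}

/-- `H = G(L₀)`: the elements of `G` fixing the sublattice `L₀` generated by the atoms
`e₁, …, eₙ` (together with `⊥`, `⊤`) pointwise; equivalently, fixing every `e i`. -/
def Hset (e : Fin n → L) (G : Subgroup (L ≃o L)) : Set (L ≃o L) :=
  {g | g ∈ G ∧ ∀ i, g (e i) = e i}

/-- `L₀′ = L(H)`: the sublattice of elements fixed by every element of `H`. -/
def L0' (e : Fin n → L) (G : Subgroup (L ≃o L)) : Set L :=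
  {x | ∀ h ∈ Hset e G, h x = x}

/-- `Hᵢ`: the automorphisms in `H` which fix every `x ∈ L` with `[x]ᵢ = ⊥`. -/
def HiSet (e : Fin n → L) (G : Subgroup (L ≃o L)) (i : Fin n) : Set (L ≃o L) :=
  {h | h ∈ Hset e G ∧ ∀ x : L, sc e x i = ⊥ → h x = x}

/-- The set `H_{ij}(x)` of transvections: elements `f ∈ G` such that
(1) `f y = y` for every `s ≠ i` and `y ≤ e s`;
(2) `[f y]ᵢ = y` for every `y ≤ eᵢ`;
(3) `[f eᵢ]ₖ = ⊥` for `k ∉ {i,j}`, `[f eᵢ]ᵢ = eᵢ` and `[f eᵢ]ⱼ = x`. -/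
def Hij (e : Fin n → L) (G : Subgroup (L ≃o L)) (i j : Fin n) (x : L) : Set (L ≃o L) :=
  {f | f ∈ G ∧
       (∀ s, s ≠ i → ∀ y, y ≤ e s → f y = y) ∧
       (∀ y, y ≤ e i → sc e (f y) i = y) ∧
       (∀ k, k ≠ i → k ≠ j → sc e (f (e i)) k = ⊥) ∧
       sc e (f (e i)) i = e i ∧ sc e (f (e i)) j = x}

/-- `G(S)`: the pointwise stabilizer in `G` of a set `S ⊆ L`. -/
def GFix (G : Subgroup (L ≃o L)) (S : Set L) : Set (L ≃o L) :=
  {g | g ∈ G ∧ ∀ x ∈ S, g x = x}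

/-- The sublattice of `L` generated by a set `S` (the smallest subset containing `S` closed
under `⊔` and `⊓`). -/
def latClosure (S : Set L) : Set L :=
  ⋂₀ {T : Set L | S ⊆ T ∧ ∀ a ∈ T, ∀ b ∈ T, a ⊔ b ∈ T ∧ a ⊓ b ∈ T}

/-- The ideal of transvections `σ_{ij}(F)`: for `i ≠ j`, the join of all `x ≤ eⱼ` with
`H_{ij}(x) ∩ F ≠ ∅`; and `σ_{ii} = eᵢ`. -/
def sigmaF (e : Fin n → L) (G : Subgroup (L ≃o L)) (F : Subgroup (L ≃o L))
    (i j : Fin n) : L :=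
  if i = j then e i
  else sSup {x | x ≤ e j ∧ (Hij e G i j x ∩ (F : Set (L ≃o L))).Nonempty}

/-- A net collection in `L₀′`: a family `(τ_{ij})` with `τ_{ij} ≤ eⱼ`, `τ_{ii} = eᵢ`,
`τ_{ij} ∈ L₀′`, and such that for every `g ∈ G`:
`[g eᵢ]ⱼ ≤ τ_{ij}` for all `i, j` iff `[g τ_{ki}]ⱼ ≤ τ_{kj}` for all `i, j, k`. -/
def IsNetCollection (e : Fin n → L) (G : Subgroup (L ≃o L)) (τ : Fin n → Fin n → L) : Prop :=
  (∀ i j, τ i j ≤ e j) ∧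
  (∀ i, τ i i = e i) ∧
  (∀ i j, τ i j ∈ L0' e G) ∧
  (∀ g ∈ G, (∀ i j, sc e (g (e i)) j ≤ τ i j) ↔
      (∀ i j k, sc e (g (τ k i)) j ≤ τ k j))

/-- The sublattice `K_τ` of `L₀′` generated by `⊥` and the elements `⨆ⱼ τ_{ij}`. -/
def Kτ (τ : Fin n → Fin n → L) : Set L :=
  latClosure ({⊥} ∪ Set.range fun i => (univ : Finset (Fin n)).sup (τ i))

/-- **The conditions 1⁰–11⁰ of the paper** for the data: a modular lattice `L` of finite
length, the atoms `e₁, …, eₙ` of a Boolean sublattice `L₀` with the same `⊥` and `⊤` as `L`,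
a subgroup `G ≤ Aut L`, and the common value `m` of the dimension on the atoms. -/
structure PaperConditions (e : Fin n → L) (G : Subgroup (L ≃o L)) (m : ℕ) : Prop where
  /-- `L₀` is a Boolean algebra with atoms `e₁, …, eₙ`: the atoms are nonzero, -/
  atom_ne_bot : ∀ i, e i ≠ ⊥
  /-- independent (`eᵢ ⊓ êᵢ = ⊥`), -/
  indep : ∀ i, e i ⊓ hatE e i = ⊥
  /-- and (condition `1⁰`) `1_{L₀} = 1_L`, i.e. `⨆ᵢ eᵢ = ⊤` (also `0_{L₀} = 0_L = ⊥`). -/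
  sup_eq_top : (univ : Finset (Fin n)).sup e = ⊤
  /-- Condition `2⁰`: the dimension function is constant, with value `m`, on the atoms. -/
  height_atom : ∀ i, Order.height (e i) = (m : ℕ∞)
  /-- Condition `3⁰`. -/
  c3 : ∀ a ∈ G, ∀ i, sc e ((a : L ≃o L) (e i)) i = e i →
      ∃ h ∈ HiSet e G i, ∀ y, y ≤ e i →
        sc e (h ((a : L ≃o L) y)) i = y ∧ sc e ((a : L ≃o L) (h y)) i = y
  /-- Condition `4⁰`. -/
  c4 : ∀ t i : Fin n, ∃ h, h ∈ HiSet e G t ∧ (∀ z ∈ L0bar e, h z = z) ∧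
      ∀ a ∈ G, ∀ r, r ≠ i → ∀ y, y ≤ e i →
        sc e ((a : L ≃o L) (h ((a : L ≃o L).symm y))) r
          = sc e ((a : L ≃o L) (sc e ((a : L ≃o L).symm y) t)) r
  /-- Condition `5⁰`. -/
  c5 : ∀ u ∈ L0bar e, ∀ i, e i ≤ u → ∀ g ∈ G, sc e ((g : L ≃o L) u) i = e i →
      ∃ t ∈ G, sc e ((g : L ≃o L) ((t : L ≃o L) (e i))) i = e i ∧
        (∀ s, s ≠ i → (t : L ≃o L) (e s) = e s) ∧
        ∀ j, sc e ((t : L ≃o L) (e i)) j ≤ sc e u j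
  /-- Condition `6⁰`. -/
  c6 : ∀ f ∈ G, ∀ g ∈ G, ∀ i j : Fin n,
      sc e ((f : L ≃o L) (e i)) j ≤ sc e ((g : L ≃o L) (e i)) j →
      ∀ x ∈ L0' e G, x ≤ e i → sc e ((f : L ≃o L) x) j ≤ sc e ((g : L ≃o L) x) j
  /-- Condition `7⁰`. -/
  c7 : ∀ j : Fin n, ∀ u, u ≤ e j → ∀ i, i ≠ j →
      ∃ (s : ℕ) (y : Fin s → L), (∀ r, y r ≤ e j) ∧
        u = (univ : Finset (Fin s)).sup y ∧ ∀ r, (Hij e G i j (y r)).Nonempty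
  /-- Condition `8⁰`. -/
  c8 : ∀ f ∈ G, ∀ i j : Fin n, i ≠ j →
      ∃ g ∈ Hij e G i j (sc e ((f : L ≃o L) (e i)) j),
        ∀ u, u ≤ e i → sc e (g u) j = sc e ((f : L ≃o L) u) j
  /-- Condition `9⁰`. -/
  c9 : ∀ i j : Fin n, i ≠ j → ∀ x, x ≤ e j → ∀ w : L,
      Order.height w = (m : ℕ∞) →
      sc e w i = e i → sc e w j = x → (∀ k, k ≠ i → k ≠ j → sc e w k = ⊥) →
      (Hij e G i j x).Nonempty → ∃ t ∈ Hij e G i j x, t w = e i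
  /-- Condition `10⁰`. -/
  c10 : ∀ i j : Fin n, i ≠ j → ∀ (s : ℕ) (xs : Fin s → L) (a : Fin s → (L ≃o L)),
      (∀ r, a r ∈ Hij e G i j (xs r)) →
      ∀ y, y ≤ (univ : Finset (Fin s)).sup xs → (Hij e G i j y).Nonempty →
      Hij e G i j y ⊆ ↑(Subgroup.closure (Hset e G ∪ Set.range a))
  /-- Condition `11⁰`. -/
  c11 : ∀ a ∈ G, ∀ t : Fin n, ∀ i j : Fin n, i ≠ j → ∀ h ∈ HiSet e G t,
      (Hij e G i j (sc e ((a : L ≃o L) (h ((a : L ≃o L).symm (e i)))) j) ∩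
        ↑(Subgroup.closure (insert (a : L ≃o L) (Hset e G)))).Nonempty


section Aux

variable {L : Type*} [CompleteLattice L] [IsModularLattice L] {n : ℕ}

lemma sc_mono (e : Fin n → L) {a b : L} (h : a ≤ b) (k : Fin n) :
    sc e a k ≤ sc e b k :=
  inf_le_inf_right _ (sup_le_sup_right h _)

lemma sc_of_le (e : Fin n → L) (hind : ∀ k, e k ⊓ hatE e k = ⊥)
    {k : Fin n} {w : L} (hw : w ≤ e k) : sc e w k = w := by
  unfold sc
  rw [sup_inf_assoc_of_le _ hw, inf_comm, hind k, sup_bot_eq]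

/-- Every element is below the join of its components. -/
lemma le_sup_sc (e : Fin n → L) (htop : (univ : Finset (Fin n)).sup e = ⊤) (z : L) :
    z ≤ (univ : Finset (Fin n)).sup (sc e z) := by
  have key : ∀ s : Finset (Fin n), z ≤ s.sup (sc e z) ⊔ sᶜ.sup e := by
    intro s
    induction s using Finset.induction_on with
    | empty => simp [htop]
    | @insert a s ha ih =>
      have hA : s.sup (sc e z) ≤ hatE e a := by
        refine Finset.sup_le fun k hk => le_trans inf_le_right ?_
        exact Finset.le_sup (Finset.mem_erase.2 ⟨fun h => ha (h ▸ hk), Finset.mem_univ k⟩)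
      have hB : ((insert a s)ᶜ).sup e ≤ hatE e a := by
        refine Finset.sup_le fun k hk => ?_
        have hka : k ≠ a := fun h => (Finset.mem_compl.1 hk) (h ▸ Finset.mem_insert_self a s)
        exact Finset.le_sup (Finset.mem_erase.2 ⟨hka, Finset.mem_univ k⟩)
      have hsplit : sᶜ.sup e = e a ⊔ ((insert a s)ᶜ).sup e := by
        rw [Finset.compl_insert]
        rw [← Finset.sup_insert, Finset.insert_erase (Finset.mem_compl.2 ha)]
      have h1 : z ≤ (s.sup (sc e z) ⊔ ((insert a s)ᶜ).sup e) ⊔ e a := by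
        refine ih.trans ?_
        rw [hsplit]
        refine sup_le (le_sup_of_le_left le_sup_left) (sup_le le_sup_right
          (le_sup_of_le_left le_sup_right))
      have h2 : z ≤ ((s.sup (sc e z) ⊔ ((insert a s)ᶜ).sup e) ⊔ e a) ⊓ (z ⊔ hatE e a) :=
        le_inf h1 le_sup_left
      rw [sup_inf_assoc_of_le _ (le_trans (sup_le hA hB) le_sup_right)] at h2
      refine h2.trans ?_
      have hsc : e a ⊓ (z ⊔ hatE e a) = sc e z a := inf_comm _ _
      rw [hsc]
      refine sup_le (sup_le ?_ le_sup_right) (le_sup_of_le_left ?_)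
      · exact le_sup_of_le_left (Finset.sup_mono (Finset.subset_insert a s))
      · exact Finset.le_sup (Finset.mem_insert_self a s)
  have := key univ
  simpa using this

lemma orderIso_finset_sup {L : Type*} [CompleteLattice L] (t : L ≃o L) {ι : Type*}
    (s : Finset ι) (f : ι → L) : t (s.sup f) = s.sup fun k => t (f k) := by
  induction s using Finset.cons_induction with
  | empty => simpa using OrderIso.map_bot t
  | cons a s ha ih => rw [Finset.sup_cons, Finset.sup_cons, OrderIso.map_sup, ih]

end Aux

/-- **Lemma 8.4.** In the setting of the paper with conditions `1⁰`–`11⁰`: let `M` be a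
sublattice of `L̄₀`. If a transvection `t ∈ H_{ij}(x)` normalizes `G(M)` inside `G`
(i.e. `t⁻¹ G(M) t = G(M)`), then `t ∈ G(M)`, i.e. `t` fixes `M` pointwise. -/
theorem transvection_normalizing_fixes {L : Type*} [CompleteLattice L] [IsModularLattice L]
    [WellFoundedLT L] [WellFoundedGT L] {n : ℕ} (e : Fin n → L)
    (G : Subgroup (L ≃o L)) (m : ℕ)
    (hc : PaperConditions e G m)
    (M : Set L) (hM0 : M ⊆ L0bar e)
    (hMlat : ∀ a ∈ M, ∀ b ∈ M, a ⊔ b ∈ M ∧ a ⊓ b ∈ M)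
    (i j : Fin n) (hij : i ≠ j) (x : L) (hx : x ≤ e j)
    (t : L ≃o L) (ht : t ∈ Hij e G i j x)
    (hnorm : (fun g : L ≃o L => t⁻¹ * g * t) '' GFix G M = GFix G M) :
    t ∈ GFix G M :=  by
  obtain ⟨htG, hfix_ne, hsc_i, hbot_k, hei, hxj⟩ := ht
  -- the diagonal-like element from condition 4⁰ (with indices t := j, i := i)
  obtain ⟨h, hhH, hhL0, hkey⟩ := hc.c4 j i
  have hhG : h ∈ G := hhH.1.1
  have hhFix : h ∈ GFix G M := ⟨hhG, fun z hz => hhL0 z (hM0 hz)⟩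
  have hconj : t⁻¹ * h * t ∈ GFix G M := by
    rw [← hnorm]; exact ⟨h, hhFix, rfl⟩
  refine ⟨htG, ?_⟩
  intro m hm
  obtain ⟨z, hzle, hzsup⟩ := hM0 hm
  -- components of m
  have hcomp : ∀ k, sc e m k = z k := by
    intro k
    have hsupe : m ⊔ hatE e k = z k ⊔ hatE e k := by
      apply le_antisymm
      · refine sup_le ?_ le_sup_right
        rw [hzsup]
        refine Finset.sup_le fun s _ => ?_
        by_cases hsk : s = k
        · subst hsk; exact le_sup_left
        · exact le_trans (le_trans (hzle s)
            (Finset.le_sup (Finset.mem_erase.2 ⟨hsk, Finset.mem_univ s⟩))) le_sup_right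
      · refine sup_le_sup_right ?_ _
        rw [hzsup]; exact Finset.le_sup (Finset.mem_univ k)
    have : sc e m k = sc e (z k) k := by unfold sc; rw [hsupe]
    rw [this, sc_of_le e hc.indep (hzle k)]
  set y : Fin n → L := fun k => sc e m k with hy
  have hyle : ∀ k, y k ≤ e k := fun k => inf_le_right
  have hysup : m = univ.sup y := by
    rw [hzsup]
    exact (Finset.sup_congr rfl fun k _ => (hcomp k).symm).symm ▸ rfl
  have hym : ∀ k, y k ≤ m := fun k => hysup ▸ Finset.le_sup (Finset.mem_univ k)
  -- the key inequality [t yᵢ]ⱼ ≤ yⱼ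
  have hv : sc e (t (y i)) j ≤ y j := by
    have h1 : (t⁻¹ * h * t : L ≃o L) m = m := hconj.2 m hm
    have h2 : (t⁻¹ * h * t : L ≃o L) (y i) ≤ m := by
      calc (t⁻¹ * h * t : L ≃o L) (y i) ≤ (t⁻¹ * h * t : L ≃o L) m :=
            (t⁻¹ * h * t : L ≃o L).monotone (hym i)
        _ = m := h1
    have h3 : sc e ((t⁻¹ * h * t : L ≃o L) (y i)) j ≤ y j := sc_mono e h2 j
    have h4 := hkey t⁻¹ (inv_mem htG) j (Ne.symm hij) (y i) (hyle i)
    have h4' : sc e (t⁻¹ (h (t (y i)))) j = sc e (t⁻¹ (sc e (t (y i)) j)) j := h4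
    have hvle : sc e (t (y i)) j ≤ e j := inf_le_right
    have htv : t (sc e (t (y i)) j) = sc e (t (y i)) j :=
      hfix_ne j (Ne.symm hij) _ hvle
    have htinv : t⁻¹ (sc e (t (y i)) j) = sc e (t (y i)) j := by
      have := congrArg t.symm htv
      rw [t.symm_apply_apply] at this
      exact this.symm
    have hrhs : sc e (t⁻¹ (sc e (t (y i)) j)) j = sc e (t (y i)) j := by
      rw [htinv, sc_of_le e hc.indep hvle]
    have hlhs : sc e ((t⁻¹ * h * t : L ≃o L) (y i)) j = sc e (t⁻¹ (h (t (y i)))) j := rfl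
    calc sc e (t (y i)) j = sc e ((t⁻¹ * h * t : L ≃o L) (y i)) j := by
          rw [hlhs, h4', hrhs]
      _ ≤ y j := h3
  -- t yᵢ ≤ m
  have hty : t (y i) ≤ m := by
    refine le_trans (le_sup_sc e hc.sup_eq_top _) (Finset.sup_le fun k _ => ?_)
    by_cases hki : k = i
    · subst hki
      rw [hsc_i (y k) (hyle k)]; exact hym k
    by_cases hkj : k = j
    · subst hkj
      exact le_trans hv (hym k)
    · have hle : sc e (t (y i)) k ≤ sc e (t (e i)) k :=
        sc_mono e (t.monotone (hyle i)) k
      rw [hbot_k k hki hkj] at hle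
      exact le_trans hle bot_le
  -- t m ≤ m
  have htm : t m ≤ m := by
    conv_lhs => rw [hysup]
    rw [orderIso_finset_sup]
    refine Finset.sup_le fun k _ => ?_
    by_cases hki : k = i
    · subst hki; exact hty
    · rw [hfix_ne k hki (y k) (hyle k)]; exact hym k
  -- iterate and use well-foundedness to get equality
  have hiter : ∀ k : ℕ, (⇑t)^[k + 1] m ≤ (⇑t)^[k] m := by
    intro k
    induction k with
    | zero => simpa using htm
    | succ k ih =>
      calc (⇑t)^[k + 1 + 1] m = t ((⇑t)^[k + 1] m) := Function.iterate_succ_apply' _ _ _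
        _ ≤ t ((⇑t)^[k] m) := t.monotone ih
        _ = (⇑t)^[k + 1] m := (Function.iterate_succ_apply' _ _ _).symm
  obtain ⟨a, ⟨k, hk⟩, hmin⟩ := (wellFounded_lt (α := L)).has_min
    (Set.range fun k : ℕ => (⇑t)^[k] m) ⟨m, 0, rfl⟩
  have hne : ¬ (⇑t)^[k + 1] m < a := hmin _ ⟨k + 1, rfl⟩
  have heq : (⇑t)^[k + 1] m = (⇑t)^[k] m := by
    subst hk
    exact ((hiter k).lt_or_eq).resolve_left hne
  have : (⇑t)^[k] (t m) = (⇑t)^[k] m := by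
    rw [← Function.iterate_succ_apply]; exact heq
  exact (t.injective.iterate k) this
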